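/- The ideal I = x_1^2·x_2·I_{(4;1,3,3)} in K[x_1,x_2,x_3] has the strong exchange property but is not an ideal of Veronese type; in particular, x_2^4x_3^3 ∈ I_{(7;3,4,3)} but x_2^4x_3^3 ∉ I, so I ≠ I_{(7;3,4,3)}. -/

import Mathlib

/-!
Multiplying by a monomial `x^c` is an order isomorphism onto its image, so the minimal generators of
`x^c · J` are the translates of those of `J`, and the strong exchange property passes from `J` to
`x^c · J`. Veronese type ideals have it, because their minimal generators are the monomials of
degree `d` bounded by `a`, and an exchange keeps both the degree and the bound.

If `I = x₁²x₂ · I_{(4;1,3,3)}` were `I_{(d;a)}`, its minimal generators `x₁³x₂x₃³` and `x₁²x₂⁴x₃`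
would force `d = 7` and `a ≥ (3,4,3)`, so `x₂⁴x₃³ ∈ I`; but every monomial of `I` is divisible by
`x₁²`.
-/

/-- A monomial in `K[x_1,...,x_n]` is identified with its exponent vector. -/
abbrev Mon (n : ℕ) := Fin n → ℕ

/-- Total degree of a monomial. -/
def degree {n : ℕ} (u : Mon n) : ℕ := ∑ i, u i

/-- A monomial ideal is identified with the set of exponent vectors of the monomials it
contains; this set is closed under multiplication by monomials. -/
def IsMonomialIdeal {n : ℕ} (I : Set (Mon n)) : Prop :=
  ∀ u ∈ I, ∀ w : Mon n, u + w ∈ I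

/-- The minimal monomial generating set `G(I)` of a monomial ideal: monomials of `I`
minimal with respect to divisibility (pointwise `≤` of exponent vectors). -/
def minGens {n : ℕ} (I : Set (Mon n)) : Set (Mon n) :=
  {u | u ∈ I ∧ ∀ v ∈ I, v ≤ u → v = u}

/-- `exch v i j` is the exponent vector of `x_j * (v / x_i)` (for `i ≠ j`). -/
def exch {n : ℕ} (v : Mon n) (i j : Fin n) : Mon n :=
  fun k => if k = i then v k - 1 else if k = j then v k + 1 else v k

/-- `component I d` is the ideal `I_⟨d⟩` generated by the degree-`d` monomials of `I`. -/
def component {n : ℕ} (I : Set (Mon n)) (d : ℕ) : Set (Mon n) :=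
  {w | ∃ u ∈ I, degree u = d ∧ u ≤ w}

/-- `I` is generated in a single degree. -/
def GeneratedInSingleDegree {n : ℕ} (I : Set (Mon n)) : Prop :=
  ∃ d, ∀ u ∈ minGens I, degree u = d

/-- A polymatroidal ideal: generated in a single degree and its generators satisfy the
exchange property. -/
def IsPolymatroidal {n : ℕ} (I : Set (Mon n)) : Prop :=
  GeneratedInSingleDegree I ∧
  ∀ u ∈ minGens I, ∀ v ∈ minGens I, ∀ i : Fin n, v i < u i →
    ∃ j : Fin n, u j < v j ∧ exch u i j ∈ I

/-- Componentwise polymatroidal: each graded component ideal `I_⟨d⟩` is polymatroidal. -/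
def ComponentwisePolymatroidal {n : ℕ} (I : Set (Mon n)) : Prop :=
  ∀ d : ℕ, IsPolymatroidal (component I d)

/-- Non-pure dual exchange property: for `u, v ∈ G(I)` with `deg u ≤ deg v` and
`deg_{x_i} v < deg_{x_i} u` there is `j` with `deg_{x_j} v > deg_{x_j} u` and
`x_i * (v / x_j) ∈ I`. -/
def NonPureDualExchange {n : ℕ} (I : Set (Mon n)) : Prop :=
  ∀ u ∈ minGens I, ∀ v ∈ minGens I, degree u ≤ degree v →
    ∀ i : Fin n, v i < u i → ∃ j : Fin n, u j < v j ∧ exch v j i ∈ I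

/-- Non-pure exchange property: for `u, v ∈ G(I)` with `deg u ≤ deg v` and
`deg_{x_i} v > deg_{x_i} u` there is `j` with `deg_{x_j} v < deg_{x_j} u` and
`x_j * (v / x_i) ∈ I`. -/
def NonPureExchange {n : ℕ} (I : Set (Mon n)) : Prop :=
  ∀ u ∈ minGens I, ∀ v ∈ minGens I, degree u ≤ degree v →
    ∀ i : Fin n, u i < v i → ∃ j : Fin n, v j < u j ∧ exch v i j ∈ I

/-- The monomial ideal generated by a set `G` of monomials. -/
def genBy {n : ℕ} (G : Set (Mon n)) : Set (Mon n) := {w | ∃ u ∈ G, u ≤ w}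

/-- The product of two monomial ideals (as sets of monomials). -/
def mulIdeal {n : ℕ} (I J : Set (Mon n)) : Set (Mon n) :=
  {w | ∃ u ∈ I, ∃ v ∈ J, w = u + v}

/-- The product of a monomial ideal with the monomial `u`. -/
def mulMon {n : ℕ} (u : Mon n) (I : Set (Mon n)) : Set (Mon n) :=
  (fun v => u + v) '' I

/-- Strong exchange property: for all generators `u, v` and all `i, j` with
`deg_{x_i} u > deg_{x_i} v` and `deg_{x_j} u < deg_{x_j} v`, `x_j * (u / x_i) ∈ I`. -/
def StrongExchange {n : ℕ} (I : Set (Mon n)) : Prop :=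
  ∀ u ∈ minGens I, ∀ v ∈ minGens I, ∀ i j : Fin n,
    v i < u i → u j < v j → exch u i j ∈ I

/-- The Veronese type ideal `I_{(d; a_1,...,a_n)}`: generated by all monomials of
degree `d` with `deg_{x_i} ≤ a i` for all `i`. -/
def veronese (n d : ℕ) (a : Fin n → ℕ) : Set (Mon n) :=
  {w | ∃ u : Mon n, degree u = d ∧ (∀ i, u i ≤ a i) ∧ u ≤ w}

/-- A list of monomials is an admissible order if each colon ideal
`(u_1,...,u_{i-1}) : u_i` is generated by a subset `S` of the variables. -/
def AdmissibleOrder {n : ℕ} (L : List (Mon n)) : Prop :=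
  ∀ i : Fin L.length, ∃ S : Set (Fin n),
    ∀ w : Mon n, (w + L.get i ∈ genBy {u | u ∈ L.take i.1}) ↔ ∃ k ∈ S, 1 ≤ w k

/-- `I` has linear quotients: some ordering of `G(I)` is admissible. -/
def HasLinearQuotients {n : ℕ} (I : Set (Mon n)) : Prop :=
  ∃ L : List (Mon n), L.Nodup ∧ (∀ u, u ∈ L ↔ u ∈ minGens I) ∧ AdmissibleOrder L

/-- `I` can be extended by linear quotients to `J`: `G(I) ⊆ G(J)` and the elements of
`G(J) \ G(I)` can be ordered `v_1,...,v_m` such that each colon ideal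
`(G(I), v_1,...,v_i) : v_{i+1}` is generated by a subset of the variables. -/
def ExtendsByLinearQuotients {n : ℕ} (I J : Set (Mon n)) : Prop :=
  I ⊆ J ∧ minGens I ⊆ minGens J ∧
  ∃ L : List (Mon n), L.Nodup ∧ (∀ u, u ∈ L ↔ u ∈ minGens J ∧ u ∉ minGens I) ∧
    ∀ i : Fin L.length, ∃ S : Set (Fin n),
      ∀ w : Mon n,
        (w + L.get i ∈ genBy (minGens I ∪ {u | u ∈ L.take i.1})) ↔ ∃ k ∈ S, 1 ≤ w k

/-- The minimal generators of `I ⊆ K[x,y]` are `u_i = x^{a i} y^{b i}`, `i = 0,...,m`,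
with `a` strictly decreasing, `b` strictly increasing, `a m = 0` and `b 0 = 0`
(so `I` is `(x,y)`-primary). -/
def yxTightGens (m : ℕ) (a b : ℕ → ℕ) (I : Set (Mon 2)) : Prop :=
  (∀ i k : ℕ, i ≤ m → k ≤ m → i < k → a k < a i ∧ b i < b k) ∧
  a m = 0 ∧ b 0 = 0 ∧
  minGens I = {u | ∃ i ≤ m, u = ![a i, b i]}

/-- `I` is `x`-tight in `[0, r]`: the `x`-exponents of the generators are exactly
`r, r-1, ..., 1, 0` (i.e. `a (r - i) = i`). -/
def xTight (I : Set (Mon 2)) (r : ℕ) : Prop :=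
  ∃ b : ℕ → ℕ, yxTightGens r (fun i => r - i) b I

/-- `I` is `y`-tight in `[0, s]`: the `y`-exponents of the generators are exactly
`0, 1, ..., s`. -/
def yTight (I : Set (Mon 2)) (s : ℕ) : Prop :=
  ∃ a : ℕ → ℕ, yxTightGens s a (fun i => i) I

/-- `I` is `yx`-tight: there is `0 ≤ j ≤ m` with `b i = i` for `i = 0,...,j` and
`a (m - i) = i` for `i = 0,...,m-j`. -/
def yxTight (I : Set (Mon 2)) : Prop :=
  ∃ (m : ℕ) (a b : ℕ → ℕ), yxTightGens m a b I ∧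
    ∃ j ≤ m, (∀ i ≤ j, b i = i) ∧ ∀ i ≤ m - j, a (m - i) = i

/-- Powers of a monomial ideal. -/
def powIdeal {n : ℕ} (I : Set (Mon n)) : ℕ → Set (Mon n)
  | 0 => Set.univ
  | k + 1 => mulIdeal (powIdeal I k) I

section Monomials

variable {n : ℕ}

lemma degree_add (u v : Mon n) : degree (u + v) = degree u + degree v := by
  simp [degree, Finset.sum_add_distrib]

lemma degree_single (i : Fin n) (k : ℕ) : degree (Pi.single i k : Mon n) = k := by
  simp [degree]

lemma eq_of_le_of_degree_eq {u v : Mon n} (h : u ≤ v) (hd : degree u = degree v) : u = v :=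
  funext fun i => (Finset.sum_eq_sum_iff_of_le fun i _ => h i).1 hd i (Finset.mem_univ i)

lemma exch_add_single {u : Mon n} {i j : Fin n} (hij : i ≠ j) (hi : 1 ≤ u i) :
    exch u i j + Pi.single i 1 = u + Pi.single j 1 := by
  funext k
  by_cases hki : k = i
  · subst hki
    simp only [Pi.add_apply, exch, if_true, Pi.single_eq_same, Pi.single_eq_of_ne hij,
      add_zero]
    omega
  · by_cases hkj : k = j
    · subst hkj
      simp [exch, hki]
    · simp [exch, hki, hkj]

lemma degree_exch {u : Mon n} {i j : Fin n} (hij : i ≠ j) (hi : 1 ≤ u i) :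
    degree (exch u i j) = degree u := by
  simpa [degree_add, degree_single] using congrArg degree (exch_add_single hij hi)

lemma exch_le {u a : Mon n} {i j : Fin n} (hu : u ≤ a) (hj : u j < a j) : exch u i j ≤ a := by
  intro k
  simp only [exch]
  split_ifs with hki hkj
  · exact (Nat.sub_le _ _).trans (hu k)
  · subst hkj
    exact hj
  · exact hu k

lemma exch_add (c u : Mon n) {i : Fin n} (j : Fin n) (hi : 1 ≤ u i) :
    exch (c + u) i j = c + exch u i j := by
  funext k
  simp only [exch, Pi.add_apply]
  split_ifs with hki
  · subst hki
    omega
  · rfl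
  · rfl

end Monomials

section MulMon

variable {n : ℕ} {c : Mon n} {I : Set (Mon n)}

lemma le_of_mem_mulMon {w : Mon n} (hw : w ∈ mulMon c I) : c ≤ w := by
  obtain ⟨u, -, rfl⟩ := hw
  exact le_self_add

lemma add_mem_mulMon {u : Mon n} (hu : u ∈ I) : c + u ∈ mulMon c I :=
  Set.mem_image_of_mem _ hu

lemma minGens_mulMon (c : Mon n) (I : Set (Mon n)) :
    minGens (mulMon c I) = mulMon c (minGens I) := by
  ext w
  constructor
  · rintro ⟨⟨u, hu, rfl⟩, hmin⟩
    refine add_mem_mulMon ⟨hu, fun v hv hvu => ?_⟩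
    exact add_left_cancel (hmin (c + v) (add_mem_mulMon hv) ((add_le_add_iff_left c).2 hvu))
  · rintro ⟨u, ⟨hu, hmin⟩, rfl⟩
    refine ⟨add_mem_mulMon hu, ?_⟩
    rintro _ ⟨v, hv, rfl⟩ hle
    rw [hmin v hv (le_of_add_le_add_left hle)]

theorem strongExchange_mulMon (hI : StrongExchange I) (c : Mon n) :
    StrongExchange (mulMon c I) := by
  rw [StrongExchange, minGens_mulMon]
  rintro _ ⟨u, hu, rfl⟩ _ ⟨v, hv, rfl⟩ i j hi hj
  simp only [Pi.add_apply, add_lt_add_iff_left] at hi hj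
  rw [exch_add c u j (by omega)]
  exact add_mem_mulMon (hI u hu v hv i j hi hj)

end MulMon

section Veronese

variable {n d : ℕ} {a : Mon n}

lemma mem_veronese_of_degree_eq {g : Mon n} (hg : degree g = d) (hga : g ≤ a) :
    g ∈ veronese n d a :=
  ⟨g, hg, hga, le_rfl⟩

lemma veronese_mono {b : Mon n} (hab : a ≤ b) : veronese n d a ⊆ veronese n d b := by
  rintro w ⟨u, hu, hua, huw⟩
  exact ⟨u, hu, fun i => (hua i).trans (hab i), huw⟩

lemma mem_minGens_veronese {g : Mon n} : g ∈ minGens (veronese n d a) ↔ degree g = d ∧ g ≤ a := by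
  constructor
  · rintro ⟨⟨u, hu, hua, hug⟩, hmin⟩
    obtain rfl := hmin u (mem_veronese_of_degree_eq hu hua) hug
    exact ⟨hu, hua⟩
  · rintro ⟨hg, hga⟩
    refine ⟨mem_veronese_of_degree_eq hg hga, ?_⟩
    rintro v ⟨u, hu, -, huv⟩ hvg
    obtain rfl : u = g := eq_of_le_of_degree_eq (huv.trans hvg) (hu.trans hg.symm)
    exact le_antisymm hvg huv

theorem strongExchange_veronese (n d : ℕ) (a : Mon n) : StrongExchange (veronese n d a) := by
  intro u hu v hv i j hi hj
  rw [mem_minGens_veronese] at hu hv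
  have hij : i ≠ j := by
    rintro rfl
    omega
  exact mem_veronese_of_degree_eq ((degree_exch hij (by omega)).trans hu.1)
    (exch_le hu.2 (hj.trans_le (hv.2 j)))

end Veronese

/-- `I = x_1^2 x_2 · I_{(4;1,3,3)}` has the strong exchange property but
is not of Veronese type; in particular `x_2^4 x_3^3 ∈ I_{(7;3,4,3)}` while
`x_2^4 x_3^3 ∉ I`, so `I ≠ I_{(7;3,4,3)}`. -/
theorem stmt_18 :
    StrongExchange (mulMon (![2,1,0] : Mon 3) (veronese 3 4 ![1,3,3])) ∧
    (¬ ∃ (d : ℕ) (a : Fin 3 → ℕ),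
        mulMon (![2,1,0] : Mon 3) (veronese 3 4 ![1,3,3]) = veronese 3 d a) ∧
    (![0,4,3] : Mon 3) ∈ veronese 3 7 ![3,4,3] ∧
    (![0,4,3] : Mon 3) ∉ mulMon (![2,1,0] : Mon 3) (veronese 3 4 ![1,3,3]) ∧
    mulMon (![2,1,0] : Mon 3) (veronese 3 4 ![1,3,3]) ≠ veronese 3 7 ![3,4,3] := by
  set I := mulMon (![2,1,0] : Mon 3) (veronese 3 4 ![1,3,3])
  have hmem : (![0,4,3] : Mon 3) ∈ veronese 3 7 ![3,4,3] :=
    mem_veronese_of_degree_eq (by decide) (Pi.le_def.2 (by decide))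
  have hnot : (![0,4,3] : Mon 3) ∉ I := fun h => by simpa using le_of_mem_mulMon h 0
  have hgen (g : Mon 3) (hg : degree g = 4) (hga : g ≤ ![1,3,3]) : ![2,1,0] + g ∈ minGens I := by
    rw [minGens_mulMon]
    exact add_mem_mulMon (mem_minGens_veronese.2 ⟨hg, hga⟩)
  refine ⟨strongExchange_mulMon (strongExchange_veronese 3 4 _) _, ?_, hmem, hnot,
    fun h => hnot (h ▸ hmem)⟩
  rintro ⟨d, a, h⟩
  obtain ⟨hd, h₁⟩ :=
    mem_minGens_veronese.1 (h ▸ hgen ![1,0,3] (by decide) (Pi.le_def.2 (by decide)))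
  obtain ⟨-, h₂⟩ :=
    mem_minGens_veronese.1 (h ▸ hgen ![0,3,1] (by decide) (Pi.le_def.2 (by decide)))
  obtain rfl : d = 7 := hd.symm.trans (by decide)
  have ha : (![3,4,3] : Mon 3) ≤ a :=
    calc (![3,4,3] : Mon 3) = (![2,1,0] + ![1,0,3]) ⊔ (![2,1,0] + ![0,3,1]) := by decide
      _ ≤ a := sup_le h₁ h₂
  exact hnot (h ▸ veronese_mono ha hmem)
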